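/- arXiv:2510.20240 — 2 statements merged into one kernel-verified Lean document; each statement's English description precedes it below -/
import Mathlib

section
/- Let f : X → X be a continuous map on a metric space (X,d) and let ε > 0. If S ⊆ X is a D1 ε-scrambled set for f and d, then the set {{x} : x ∈ S} ⊆ 𝒦(X) of singletons is a D1 ε-scrambled set for f̄ and d_H, and it has the same cardinality as S. Consequently, if (X,f) is distributionally chaotic of type 1 (resp. uniformly distributionally chaotic of type 1) for d, then so is (𝒦(X), f̄) for d_H. -/
open Filter Metric TopologicalSpace

/-- The hyperextension of a continuous map `f`, acting on the space `𝒦(X)` of nonempty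
compact subsets of `X` (endowed with the Hausdorff metric) by `K ↦ f(K)`. -/
noncomputable def hyperext {X : Type*} [MetricSpace X] (f : X → X) (hf : Continuous f) :
    NonemptyCompacts X → NonemptyCompacts X :=
  fun K => ⟨⟨f '' K, K.isCompact.image hf⟩, K.nonempty.image f⟩

/-- The singleton `{x}` as a nonempty compact set. -/
noncomputable def singNC {X : Type*} [MetricSpace X] (x : X) : NonemptyCompacts X :=
  ⟨⟨{x}, isCompact_singleton⟩, Set.singleton_nonempty x⟩

/-- Lower density of a set of positive integers. -/
noncomputable def lowerDensity (A : Set ℕ) : ℝ :=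
  liminf (fun n : ℕ => (Nat.card ↥(A ∩ Set.Icc 1 n) : ℝ) / (n : ℝ)) atTop

/-- Upper density of a set of positive integers. -/
noncomputable def upperDensity (A : Set ℕ) : ℝ :=
  limsup (fun n : ℕ => (Nat.card ↥(A ∩ Set.Icc 1 n) : ℝ) / (n : ℝ)) atTop

/-- The lower distributional function Φ_{(y,z)}(δ) generated by `g` for the pair `(y,z)`. -/
noncomputable def lowerDistFn {Y : Type*} [MetricSpace Y] (g : Y → Y) (y z : Y) (δ : ℝ) : ℝ :=
  lowerDensity {j : ℕ | dist (g^[j] y) (g^[j] z) < δ}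

/-- The upper distributional function Φ*_{(y,z)}(δ) generated by `g` for the pair `(y,z)`. -/
noncomputable def upperDistFn {Y : Type*} [MetricSpace Y] (g : Y → Y) (y z : Y) (δ : ℝ) : ℝ :=
  upperDensity {j : ℕ | dist (g^[j] y) (g^[j] z) < δ}

/-- `(y,z)` is a distributional ε-pair of type 1 (D1 ε-pair) for `g`. -/
def IsD1Pair {Y : Type*} [MetricSpace Y] (g : Y → Y) (ε : ℝ) (y z : Y) : Prop :=
  lowerDistFn g y z ε = 0 ∧ ∀ δ : ℝ, 0 < δ → upperDistFn g y z δ = 1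

/-- `S` is a D1 ε-scrambled set for `g`. -/
def D1Scrambled {Y : Type*} [MetricSpace Y] (g : Y → Y) (ε : ℝ) (S : Set Y) : Prop :=
  ∀ y ∈ S, ∀ z ∈ S, y ≠ z → IsD1Pair g ε y z

/-- `(Y,g)` is distributionally chaotic of type 1 (DC1). -/
def DC1 {Y : Type*} [MetricSpace Y] (g : Y → Y) : Prop :=
  ∃ S : Set Y, ¬ S.Countable ∧ ∀ y ∈ S, ∀ z ∈ S, y ≠ z → ∃ ε > 0, IsD1Pair g ε y z

/-- `(Y,g)` is uniformly distributionally chaotic of type 1 (U-DC1). -/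
def UDC1 {Y : Type*} [MetricSpace Y] (g : Y → Y) : Prop :=
  ∃ ε > 0, ∃ S : Set Y, ¬ S.Countable ∧ D1Scrambled g ε S

lemma dist_singNC {X : Type*} [MetricSpace X] (x y : X) :
    dist (singNC x) (singNC y) = dist x y := by
  rw [NonemptyCompacts.dist_eq]
  simp [singNC, hausdorffDist, EMetric.hausdorffEdist_def, EMetric.infEdist_singleton,
    edist_comm, dist_edist]

lemma singNC_injective {X : Type*} [MetricSpace X] :
    Function.Injective (singNC (X := X)) := by
  intro x y h
  have := congrArg (fun K : NonemptyCompacts X => (K : Set X)) h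
  simpa [singNC] using this

lemma hyperext_iterate_singNC {X : Type*} [MetricSpace X] (f : X → X) (hf : Continuous f)
    (j : ℕ) (x : X) : (hyperext f hf)^[j] (singNC x) = singNC (f^[j] x) := by
  induction j generalizing x with
  | zero => simp
  | succ n ih =>
    rw [Function.iterate_succ_apply, Function.iterate_succ_apply]
    have : hyperext f hf (singNC x) = singNC (f x) := by
      apply NonemptyCompacts.ext
      simp [hyperext, singNC]
    rw [this, ih]

lemma distFn_sets_eq {X : Type*} [MetricSpace X] (f : X → X) (hf : Continuous f)
    (y z : X) (δ : ℝ) :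
    {j : ℕ | dist ((hyperext f hf)^[j] (singNC y)) ((hyperext f hf)^[j] (singNC z)) < δ}
      = {j : ℕ | dist (f^[j] y) (f^[j] z) < δ} := by
  ext j
  simp [hyperext_iterate_singNC, dist_singNC]

lemma isD1Pair_singNC {X : Type*} [MetricSpace X] (f : X → X) (hf : Continuous f)
    (ε : ℝ) (y z : X) (h : IsD1Pair f ε y z) :
    IsD1Pair (hyperext f hf) ε (singNC y) (singNC z) := by
  constructor
  · rw [lowerDistFn, distFn_sets_eq]; exact h.1
  · intro δ hδ
    rw [upperDistFn, distFn_sets_eq]; exact h.2 δ hδ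

lemma d1Scrambled_singNC {X : Type*} [MetricSpace X] (f : X → X) (hf : Continuous f)
    (ε : ℝ) (S : Set X) (hS : D1Scrambled f ε S) :
    D1Scrambled (hyperext f hf) ε (singNC '' S) := by
  rintro _ ⟨y, hy, rfl⟩ _ ⟨z, hz, rfl⟩ hne
  exact isD1Pair_singNC f hf ε y z (hS y hy z hz (fun h => hne (by rw [h])))

lemma not_countable_image_singNC {X : Type*} [MetricSpace X] {S : Set X}
    (h : ¬ S.Countable) : ¬ (singNC '' S).Countable := by
  intro hc
  exact h ((hc.preimage singNC_injective).mono (Set.subset_preimage_image _ _))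

/-- If `S` is a D1 ε-scrambled set for `f` and `d`, then the set of singletons
`{{x} : x ∈ S}` is a D1 ε-scrambled set for the hyperextension `f̄` and the Hausdorff
metric, of the same cardinality as `S`. Consequently, DC1 (resp. U-DC1) transfers from
`(X,f)` to `(𝒦(X),f̄)`. -/
theorem d1Scrambled_singletons_and_transfer {X : Type*} [MetricSpace X]
    (f : X → X) (hf : Continuous f) (ε : ℝ) (hε : 0 < ε)
    (S : Set X) (hS : D1Scrambled f ε S) :
    (D1Scrambled (hyperext f hf) ε (singNC '' S) ∧
      Cardinal.mk ↥(singNC '' S) = Cardinal.mk ↥S) ∧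
    (DC1 f → DC1 (hyperext f hf)) ∧
    (UDC1 f → UDC1 (hyperext f hf)) := by
  refine ⟨⟨d1Scrambled_singNC f hf ε S hS, Cardinal.mk_image_eq singNC_injective⟩, ?_, ?_⟩
  · rintro ⟨T, hTc, hT⟩
    refine ⟨singNC '' T, not_countable_image_singNC hTc, ?_⟩
    rintro _ ⟨y, hy, rfl⟩ _ ⟨z, hz, rfl⟩ hne
    obtain ⟨ε', hε', hp⟩ := hT y hy z hz (fun h => hne (by rw [h]))
    exact ⟨ε', hε', isD1Pair_singNC f hf ε' y z hp⟩
  · rintro ⟨ε', hε', T, hTc, hT⟩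
    exact ⟨ε', hε', singNC '' T, not_countable_image_singNC hTc,
      d1Scrambled_singNC f hf ε' T hT⟩
end

section
/- Let f : X → X be a continuous map on a metric space (X,d), let 0 < ε ≤ 1, and let K, L be nonempty compact subsets of X. If (K,L) is a D2 ε-pair for the hyperextension f̄ and the Hausdorff metric d_H, then there exists 0 < ε' ≤ ε such that at least one of the pairs (K, K∪L) or (K∪L, L) is a D2 ε'-pair for f̄ and d_H. -/
open Filter Metric TopologicalSpace

/-- `(y,z)` is a distributional ε-pair of type 2 (D2 ε-pair) for `g`, `0 < ε ≤ 1`: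
`Φ_{(y,z)}(ε) ≤ 1 - ε` and `Φ*_{(y,z)}(δ) = 1` for all `δ > 0`. -/
def IsD2Pair {Y : Type*} [MetricSpace Y] (g : Y → Y) (ε : ℝ) (y z : Y) : Prop :=
  lowerDistFn g y z ε ≤ 1 - ε ∧ ∀ δ : ℝ, 0 < δ → upperDistFn g y z δ = 1

/-!
`K ∪ L` lies between `K` and `L` in the Hausdorff metric: `d_H(K, K ∪ L)` and `d_H(K ∪ L, L)`
are both at most `d_H(K, L)`, and this persists along orbits since `f̄` commutes with unions.
So both new pairs inherit `Φ* ≡ 1` from `(K, L)`. If neither were a D2 `ε/2`-pair, both sets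
`{j | d_H < ε/2}` would have lower density `> 1 - ε/2`; their intersection, contained in
`{j | d_H(f̄ʲK, f̄ʲL) < ε}` by the triangle inequality, would then have lower density
`> 1 - ε`.
-/

section Density

noncomputable def densityRatio (A : Set ℕ) (n : ℕ) : ℝ :=
  (Nat.card ↥(A ∩ Set.Icc 1 n) : ℝ) / (n : ℝ)

lemma densityRatio_nonneg (A : Set ℕ) (n : ℕ) : 0 ≤ densityRatio A n := by
  unfold densityRatio; positivity

lemma ncard_le_of_subset_Icc {s : Set ℕ} {n : ℕ} (h : s ⊆ Set.Icc 1 n) : s.ncard ≤ n := by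
  simpa using Set.ncard_le_ncard h (Set.finite_Icc 1 n)

lemma densityRatio_le_one (A : Set ℕ) (n : ℕ) : densityRatio A n ≤ 1 := by
  rcases Nat.eq_zero_or_pos n with rfl | hn
  · simp [densityRatio]
  · rw [densityRatio, div_le_one (by exact_mod_cast hn)]
    exact_mod_cast ncard_le_of_subset_Icc Set.inter_subset_right

lemma densityRatio_mono {A B : Set ℕ} (h : A ⊆ B) (n : ℕ) :
    densityRatio A n ≤ densityRatio B n := by
  unfold densityRatio
  gcongr
  exact Set.ncard_le_ncard (Set.inter_subset_inter_left _ h)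
    ((Set.finite_Icc 1 n).inter_of_right _)

lemma densityRatio_add_densityRatio_le_inter (A B : Set ℕ) (n : ℕ) :
    densityRatio A n + densityRatio B n ≤ densityRatio (A ∩ B) n + 1 := by
  rcases Nat.eq_zero_or_pos n with rfl | hn
  · simp [densityRatio]
  have hn' : (0 : ℝ) < n := by exact_mod_cast hn
  have hcard : (A ∩ Set.Icc 1 n).ncard + (B ∩ Set.Icc 1 n).ncard
      ≤ (A ∩ B ∩ Set.Icc 1 n).ncard + n := by
    have hfin := Set.finite_Icc 1 n
    rw [← Set.ncard_inter_add_ncard_union _ _ (hfin.inter_of_right _) (hfin.inter_of_right _),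
      ← Set.inter_inter_distrib_right]
    exact Nat.add_le_add_left (ncard_le_of_subset_Icc
      (Set.union_subset Set.inter_subset_right Set.inter_subset_right)) _
  rw [densityRatio, densityRatio, densityRatio, ← add_div,
    div_add_one hn'.ne', div_le_div_iff_of_pos_right hn']
  exact_mod_cast hcard

lemma isBoundedUnder_ge_densityRatio (A : Set ℕ) :
    IsBoundedUnder (· ≥ ·) atTop (densityRatio A) :=
  isBoundedUnder_of ⟨0, densityRatio_nonneg A⟩

lemma isBoundedUnder_le_densityRatio (A : Set ℕ) :
    IsBoundedUnder (· ≤ ·) atTop (densityRatio A) :=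
  isBoundedUnder_of ⟨1, densityRatio_le_one A⟩

lemma upperDensity_le_one (A : Set ℕ) : upperDensity A ≤ 1 :=
  limsup_le_of_le (isBoundedUnder_ge_densityRatio A).isCoboundedUnder_le
    (Eventually.of_forall (densityRatio_le_one A))

lemma upperDensity_mono {A B : Set ℕ} (h : A ⊆ B) : upperDensity A ≤ upperDensity B :=
  limsup_le_limsup (Eventually.of_forall (densityRatio_mono h))
    (isBoundedUnder_ge_densityRatio A).isCoboundedUnder_le (isBoundedUnder_le_densityRatio B)

lemma lowerDensity_add_lowerDensity_le_inter (A B : Set ℕ) :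
    lowerDensity A + lowerDensity B ≤ lowerDensity (A ∩ B) + 1 := by
  have hbdd := isBoundedUnder_ge_densityRatio
  have hcobdd C := (isBoundedUnder_le_densityRatio C).isCoboundedUnder_ge
  calc lowerDensity A + lowerDensity B
      ≤ liminf (densityRatio A + densityRatio B) atTop :=
        le_liminf_add (hbdd A) (isBoundedUnder_le_densityRatio A) (hbdd B) (hcobdd B)
    _ ≤ liminf (fun n => densityRatio (A ∩ B) n + 1) atTop :=
        liminf_le_liminf (Eventually.of_forall (densityRatio_add_densityRatio_le_inter A B))
          (isBoundedUnder_of ⟨0, fun n =>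
            add_nonneg (densityRatio_nonneg A n) (densityRatio_nonneg B n)⟩)
          (isBoundedUnder_of ⟨2, fun n => by
            linarith [densityRatio_le_one (A ∩ B) n]⟩).isCoboundedUnder_ge
    _ = lowerDensity (A ∩ B) + 1 :=
        liminf_add_const atTop _ 1 (hcobdd _) (hbdd _)

end Density

section DistFn

variable {Y : Type*} [MetricSpace Y] {g : Y → Y}

lemma upperDistFn_eq_one_of_dist_le {y z y' z' : Y} {δ : ℝ}
    (hle : ∀ j, dist (g^[j] y') (g^[j] z') ≤ dist (g^[j] y) (g^[j] z))
    (h : upperDistFn g y z δ = 1) : upperDistFn g y' z' δ = 1 :=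
  le_antisymm (upperDensity_le_one _) <|
    h ▸ upperDensity_mono fun j hj => (hle j).trans_lt hj

lemma lowerDistFn_add_lowerDistFn_le (y w z : Y) (δ₁ δ₂ : ℝ) :
    lowerDistFn g y w δ₁ + lowerDistFn g w z δ₂ ≤ lowerDistFn g y z (δ₁ + δ₂) + 1 := by
  refine (lowerDensity_add_lowerDensity_le_inter _ _).trans ?_
  gcongr
  refine liminf_le_liminf (Eventually.of_forall (densityRatio_mono ?_))
    (isBoundedUnder_ge_densityRatio _) (isBoundedUnder_le_densityRatio _).isCoboundedUnder_ge
  rintro j ⟨hyw, hwz⟩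
  exact (dist_triangle _ _ _).trans_lt (add_lt_add hyw hwz)

theorem IsD2Pair.half_left_or_half_right {ε : ℝ} {y z : Y} (h : IsD2Pair g ε y z) (w : Y)
    (hyw : ∀ j, dist (g^[j] y) (g^[j] w) ≤ dist (g^[j] y) (g^[j] z))
    (hwz : ∀ j, dist (g^[j] w) (g^[j] z) ≤ dist (g^[j] y) (g^[j] z)) :
    IsD2Pair g (ε / 2) y w ∨ IsD2Pair g (ε / 2) w z := by
  by_contra! hneither
  have hlow_yw : 1 - ε / 2 < lowerDistFn g y w (ε / 2) :=
    not_le.1 fun hle =>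
      hneither.1 ⟨hle, fun δ hδ => upperDistFn_eq_one_of_dist_le hyw (h.2 δ hδ)⟩
  have hlow_wz : 1 - ε / 2 < lowerDistFn g w z (ε / 2) :=
    not_le.1 fun hle =>
      hneither.2 ⟨hle, fun δ hδ => upperDistFn_eq_one_of_dist_le hwz (h.2 δ hδ)⟩
  have hsum := lowerDistFn_add_lowerDistFn_le (g := g) y w z (ε / 2) (ε / 2)
  rw [add_halves] at hsum
  linarith [h.1]

end DistFn

section Hyperspace

variable {X : Type*} [MetricSpace X]

namespace TopologicalSpace.NonemptyCompacts

lemma dist_sup_right_le (S T : NonemptyCompacts X) : dist S (S ⊔ T) ≤ dist S T := by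
  have hfin := Metric.hausdorffEDist_ne_top_of_nonempty_of_bounded S.nonempty T.nonempty
    S.isCompact.isBounded T.isCompact.isBounded
  rw [Metric.NonemptyCompacts.dist_eq, Metric.NonemptyCompacts.dist_eq, coe_sup]
  refine ENNReal.toReal_mono hfin ?_
  calc hausdorffEDist (S : Set X) (S ∪ T)
      = hausdorffEDist ((S : Set X) ∪ S) (S ∪ T) := by rw [Set.union_self]
    _ ≤ max (hausdorffEDist (S : Set X) S) (hausdorffEDist (S : Set X) T) :=
        hausdorffEDist_union_le
    _ = hausdorffEDist (S : Set X) T := by rw [hausdorffEDist_self, zero_max]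

lemma dist_sup_left_le (S T : NonemptyCompacts X) : dist (S ⊔ T) T ≤ dist S T := by
  rw [dist_comm, sup_comm, dist_comm S]
  exact dist_sup_right_le T S

end TopologicalSpace.NonemptyCompacts

lemma hyperext_sup (f : X → X) (hf : Continuous f) (S T : NonemptyCompacts X) :
    hyperext f hf (S ⊔ T) = hyperext f hf S ⊔ hyperext f hf T :=
  NonemptyCompacts.ext (Set.image_union f S T)

end Hyperspace

theorem d2Pair_union_of_d2Pair_general {X : Type*} [MetricSpace X]
    (f : X → X) (hf : Continuous f) (ε : ℝ) (hε0 : 0 < ε)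
    (K L KL : NonemptyCompacts X) (hKL : (KL : Set X) = (K : Set X) ∪ (L : Set X))
    (h : IsD2Pair (hyperext f hf) ε K L) :
    ∃ ε' : ℝ, 0 < ε' ∧ ε' ≤ ε ∧
      (IsD2Pair (hyperext f hf) ε' K KL ∨ IsD2Pair (hyperext f hf) ε' KL L) := by
  obtain rfl : KL = K ⊔ L := NonemptyCompacts.ext hKL
  have hiterate j :
      (hyperext f hf)^[j] (K ⊔ L) = (hyperext f hf)^[j] K ⊔ (hyperext f hf)^[j] L :=
    Function.Semiconj₂.iterate (hyperext_sup f hf) j K L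
  refine ⟨ε / 2, half_pos hε0, half_le_self hε0.le, h.half_left_or_half_right (K ⊔ L) ?_ ?_⟩
  · intro j
    rw [hiterate]
    exact NonemptyCompacts.dist_sup_right_le _ _
  · intro j
    rw [hiterate]
    exact NonemptyCompacts.dist_sup_left_le _ _

/-- If `(K,L)` is a D2 ε-pair for the hyperextension `f̄` and the Hausdorff metric, with
`0 < ε ≤ 1`, then there exists `0 < ε' ≤ ε` such that at least one of `(K, K ∪ L)` or
`(K ∪ L, L)` is a D2 ε'-pair for `f̄` and `d_H`. -/
theorem d2Pair_union_of_d2Pair {X : Type*} [MetricSpace X]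
    (f : X → X) (hf : Continuous f) (ε : ℝ) (hε0 : 0 < ε) (hε1 : ε ≤ 1)
    (K L KL : NonemptyCompacts X) (hKL : (KL : Set X) = (K : Set X) ∪ (L : Set X))
    (h : IsD2Pair (hyperext f hf) ε K L) :
    ∃ ε' : ℝ, 0 < ε' ∧ ε' ≤ ε ∧
      (IsD2Pair (hyperext f hf) ε' K KL ∨ IsD2Pair (hyperext f hf) ε' KL L) :=
  d2Pair_union_of_d2Pair_general f hf ε hε0 K L KL hKL h
end
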